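/- arXiv:2509.00011 — 2 statements merged into one kernel-verified Lean document; each statement's English description precedes it below -/
import Mathlib

section
/- Let V solve Thiele's equation on basis (δ,μ) with V(n)=S̄, let v(t)=exp(-∫₀ᵗδ), M(t)=N(t)-∫₀ᵗ1_{T>r}μ(r)dr, and define the stochastic surplus Θ(t) = ∫₀ᵗ (v(r)/v(t)) dB(r) - 1_{T>t}V(t). Then dΘ(t) = δ(t)Θ(t)dt - (S(t)-V(t))dM(t); equivalently, the discounted surplus satisfies d(v(t)Θ(t)) = -v(t)(S(t)-V(t))dM(t). -/
/-!
Before death the discounted surplus `v Θ` is the retrospective premium reserve `∫₀ᵗ v Prem`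
minus the discounted prospective reserve `v V`, whose drift is `v (S - V) μ` by Thiele's
equation; at death it jumps by `-v(T) (S - V)(T)` and stays constant afterwards. The fundamental
theorem of calculus on either side of `T` gives the discounted dynamics, and dividing by `v`,
whose derivative is `-δ v`, adds the drift `δ Θ`.
-/

open MeasureTheory Set
open scoped Interval

theorem hasDerivAt_exp_neg_integral {δ : ℝ → ℝ} (hδ : Continuous δ) (a t : ℝ) :
    HasDerivAt (fun s => Real.exp (-∫ r in a..s, δ r))
      (-δ t * Real.exp (-∫ r in a..t, δ r)) t :=
  ((hδ.integral_hasStrictDerivAt a t).hasDerivAt.neg.exp).congr_deriv (mul_comm _ _)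

theorem HasDerivAt.div_of_hasDerivAt_neg_mul {X v δ : ℝ → ℝ} {x r : ℝ} (hX : HasDerivAt X x r)
    (hv : HasDerivAt v (-δ r * v r) r) (hv0 : v r ≠ 0) :
    HasDerivAt (fun s => X s / v s) (x / v r + δ r * (X r / v r)) r :=
  (hX.div hv hv0).congr_deriv (by field_simp; ring)

theorem HasDerivAt.sub_mul_of_thiele {P v V δ μ Prem S : ℝ → ℝ} {r : ℝ}
    (hP : HasDerivAt P (v r * Prem r) r) (hv : HasDerivAt v (-δ r * v r) r)
    (hV : HasDerivAt V (δ r * V r + Prem r - μ r * (S r - V r)) r) :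
    HasDerivAt (fun s => P s - v s * V s) (v r * (S r - V r) * μ r) r :=
  (hP.sub (hv.mul hV)).congr_deriv (by ring)

section PiecewiseIntegral

variable {f₁ f₂ : ℝ → ℝ} {a m τ t : ℝ}

theorem ite_lt_ae_eq_left (ham : a ≤ m) (hmτ : m ≤ τ) :
    (fun r => if r < τ then f₁ r else f₂ r) =ᵐ[volume.restrict (Ι a m)] f₁ := by
  rw [Filter.EventuallyEq, ae_restrict_iff' measurableSet_uIoc]
  filter_upwards [Measure.ae_ne volume τ] with r hrτ hr
  rw [uIoc_of_le ham] at hr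
  exact if_pos ((hr.2.trans hmτ).lt_of_ne hrτ)

theorem ite_lt_eqOn_right :
    EqOn (fun r => if r < τ then f₁ r else f₂ r) f₂ (Ι (min t τ) t) := by
  intro r hr
  rw [uIoc_of_le (min_le_left t τ), mem_Ioc, min_lt_iff] at hr
  exact if_neg (hr.1.resolve_left hr.2.not_gt).not_gt

theorem intervalIntegrable_ite_lt (haτ : a ≤ τ) (hat : a ≤ t)
    (h₁ : IntervalIntegrable f₁ volume a (min t τ)) (h₂ : IntervalIntegrable f₂ volume (min t τ) t) :
    IntervalIntegrable (fun r => if r < τ then f₁ r else f₂ r) volume a t :=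
  (h₁.congr_ae (ite_lt_ae_eq_left (le_min hat haτ) (min_le_right t τ)).symm).trans
    (h₂.congr ite_lt_eqOn_right.symm)

theorem integral_ite_lt (haτ : a ≤ τ) (hat : a ≤ t)
    (h₁ : IntervalIntegrable f₁ volume a (min t τ)) (h₂ : IntervalIntegrable f₂ volume (min t τ) t) :
    ∫ r in a..t, (if r < τ then f₁ r else f₂ r) =
      (∫ r in a..min t τ, f₁ r) + ∫ r in min t τ..t, f₂ r := by
  have hleft := ite_lt_ae_eq_left (f₁ := f₁) (f₂ := f₂) (le_min hat haτ) (min_le_right t τ)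
  rw [← intervalIntegral.integral_add_adjacent_intervals (h₁.congr_ae hleft.symm)
      (h₂.congr ite_lt_eqOn_right.symm),
    intervalIntegral.integral_congr_ae_restrict hleft,
    intervalIntegral.integral_congr_ae (.of_forall fun r hr => ite_lt_eqOn_right hr)]

end PiecewiseIntegral

theorem sub_eq_integral_ite_add_jump {F F₁ F₂ f₁ f₂ : ℝ → ℝ} {a τ t : ℝ} (haτ : a ≤ τ) (hat : a ≤ t)
    (hF : ∀ s ∈ Icc a t, F s = if s < τ then F₁ s else F₂ s)
    (hF₁ : ∀ r ∈ Icc a (min t τ), HasDerivAt F₁ (f₁ r) r)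
    (hF₂ : ∀ r ∈ Icc τ t, HasDerivAt F₂ (f₂ r) r)
    (hf₁ : IntervalIntegrable f₁ volume a (min t τ))
    (hf₂ : IntervalIntegrable f₂ volume (min t τ) t) :
    F t - F a = (∫ r in a..t, if r < τ then f₁ r else f₂ r)
      + if a < τ ∧ τ ≤ t then F₂ τ - F₁ τ else 0 := by
  have hm : a ≤ min t τ := le_min hat haτ
  rw [integral_ite_lt haτ hat hf₁ hf₂, hF t ⟨hat, le_rfl⟩, hF a ⟨le_rfl, hat⟩,
    intervalIntegral.integral_eq_sub_of_hasDerivAt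
      (fun r hr => hF₁ r (uIcc_of_le hm ▸ hr)) hf₁]
  rcases lt_or_ge t τ with htτ | hτt
  · rw [min_eq_left htτ.le, intervalIntegral.integral_same, if_pos htτ,
      if_pos (hat.trans_lt htτ), if_neg fun h => h.2.not_gt htτ]
    ring
  · rw [min_eq_right hτt] at hf₂ ⊢
    rw [intervalIntegral.integral_eq_sub_of_hasDerivAt
      (fun r hr => hF₂ r (uIcc_of_le hτt ▸ hr)) hf₂, if_neg hτt.not_gt]
    rcases haτ.lt_or_eq with haτ | rfl
    · rw [if_pos haτ, if_pos ⟨haτ, hτt⟩]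
      ring
    · simp

theorem sub_eq_integral_mul_add_jump_of_mul_eq_ite {v δ Θ X₁ y : ℝ → ℝ} {C a τ t : ℝ}
    (haτ : a ≤ τ) (hat : a ≤ t) (hv : ∀ r, HasDerivAt v (-δ r * v r) r) (hv0 : ∀ r, v r ≠ 0)
    (hδ : Continuous δ) (hΘ : ∀ s ∈ Icc a t, v s * Θ s = if s < τ then X₁ s else C)
    (hX₁ : ∀ r ∈ Icc a (min t τ), HasDerivAt X₁ (v r * y r) r)
    (hy : IntervalIntegrable y volume a (min t τ)) :
    Θ t - Θ a = (∫ r in a..t, δ r * Θ r) + (∫ r in a..t, if r < τ then y r else 0)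
      + if a < τ ∧ τ ≤ t then (C - X₁ τ) / v τ else 0 := by
  have hvc : Continuous v := continuous_iff_continuousAt.2 fun r => (hv r).continuousAt
  have hm : a ≤ min t τ := le_min hat haτ
  have hΘ' : ∀ s ∈ Icc a t, Θ s = if s < τ then X₁ s / v s else C / v s := fun s hs => by
    rw [← apply_ite (· / v s), ← hΘ s hs, mul_div_cancel_left₀ _ (hv0 s)]
  have hX₁c : ContinuousOn X₁ (Icc a (min t τ)) := fun r hr =>
    (hX₁ r hr).continuousAt.continuousWithinAt
  have hg₁ : IntervalIntegrable (fun r => δ r * (X₁ r / v r)) volume a (min t τ) :=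
    (hδ.continuousOn.mul (hX₁c.div hvc.continuousOn fun r _ => hv0 r)).intervalIntegrable_of_Icc hm
  have hg₂ : IntervalIntegrable (fun r => δ r * (C / v r)) volume (min t τ) t :=
    (hδ.mul (continuous_const.div hvc hv0)).intervalIntegrable _ _
  have hδΘ : EqOn (fun r => δ r * Θ r)
      (fun r => if r < τ then δ r * (X₁ r / v r) else δ r * (C / v r)) (uIcc a t) := by
    intro r hr
    rw [uIcc_of_le hat] at hr
    simp only [hΘ' r hr, mul_ite]
  rw [sub_eq_integral_ite_add_jump haτ hat hΘ'
      (fun r hr => ((hX₁ r hr).div_of_hasDerivAt_neg_mul (hv r) (hv0 r)).congr_deriv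
        (by rw [mul_div_cancel_left₀ _ (hv0 r)]))
      (fun r _ => ((hasDerivAt_const r C).div_of_hasDerivAt_neg_mul (hv r) (hv0 r)).congr_deriv
        (by rw [zero_div, zero_add]))
      (hy.add hg₁) hg₂,
    intervalIntegral.integral_congr hδΘ,
    ← intervalIntegral.integral_add (intervalIntegrable_ite_lt haτ hat hg₁ hg₂)
      (intervalIntegrable_ite_lt haτ hat hy intervalIntegrable_const), sub_div]
  congr 2
  funext r
  split_ifs <;> ring

theorem mul_surplus_eq_ite {v Prem S V : ℝ → ℝ} {τ s : ℝ} (hτ : 0 ≤ τ) (hs : 0 ≤ s)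
    (hvPrem : IntervalIntegrable (fun r => v r * Prem r) volume 0 (min s τ)) (hvs : v s ≠ 0) :
    v s * ((∫ r in (0:ℝ)..s, (v r / v s) * (if r < τ then Prem r else 0))
      - (if 0 < τ ∧ τ ≤ s then (v τ / v s) * S τ else 0) - (if s < τ then V s else 0))
      = if s < τ then (∫ r in (0:ℝ)..s, v r * Prem r) - v s * V s
        else (∫ r in (0:ℝ)..τ, v r * Prem r) - if 0 < τ then v τ * S τ else 0 := by
  have hintegrand : (fun r => (v r / v s) * (if r < τ then Prem r else 0))
      = fun r => (v s)⁻¹ * (if r < τ then v r * Prem r else 0) := by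
    funext r
    split_ifs <;> ring
  rw [hintegrand, intervalIntegral.integral_const_mul,
    integral_ite_lt hτ hs hvPrem intervalIntegrable_const, intervalIntegral.integral_zero, add_zero]
  rcases lt_or_ge s τ with hsτ | hτs
  · rw [min_eq_left hsτ.le, if_neg fun h => h.2.not_gt hsτ, if_pos hsτ, if_pos hsτ]
    field_simp
    ring
  · rw [min_eq_right hτs, if_neg hτs.not_gt, if_neg hτs.not_gt]
    by_cases hτ0 : 0 < τ
    · rw [if_pos ⟨hτ0, hτs⟩, if_pos hτ0]
      field_simp
      ring
    · rw [if_neg fun h => hτ0 h.1, if_neg hτ0]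
      field_simp
      ring

/-- The stochastic integral against `M = N - ∫ 1_{T>r} μ dr` is written out pathwise for the
single-jump counting process `N(t) = 1_{0 < T ≤ t}`. -/
theorem single_basis_surplus_dynamics_general
    {Ω : Type*} (n : ℝ)
    (T : Ω → ℝ) (hTnn : ∀ ω, 0 ≤ T ω)
    (δ μ Prem S V : ℝ → ℝ)
    (hδ : Continuous δ) (hμ : Continuous μ)
    (hPrem : Continuous Prem) (hS : Continuous S)
    (v : ℝ → ℝ) (hv : ∀ t, v t = Real.exp (-(∫ r in (0:ℝ)..t, δ r)))
    -- V solves Thiele's equation with V(n) = S̄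
    (hV : ∀ t ∈ Icc (0:ℝ) n,
      HasDerivAt V (δ t * V t + Prem t - μ t * (S t - V t)) t)
    -- stochastic surplus Θ(t) = ∫₀ᵗ (v r / v t) dB(r) - 1_{T>t} V(t)
    (Θ : ℝ → Ω → ℝ)
    (hΘ : ∀ t ω, Θ t ω =
      (∫ r in (0:ℝ)..t, (v r / v t) * (if r < T ω then Prem r else 0))
      - (if 0 < T ω ∧ T ω ≤ t then (v (T ω) / v t) * S (T ω) else 0)
      - (if t < T ω then V t else 0)) :
    ∀ ω, ∀ t ∈ Icc (0:ℝ) n,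
      (Θ t ω - Θ 0 ω =
        (∫ r in (0:ℝ)..t, δ r * Θ r ω)
        - ((if 0 < T ω ∧ T ω ≤ t then S (T ω) - V (T ω) else 0)
            - ∫ r in (0:ℝ)..t, (if r < T ω then (S r - V r) * μ r else 0)))
      ∧ (v t * Θ t ω - v 0 * Θ 0 ω =
        -((if 0 < T ω ∧ T ω ≤ t then v (T ω) * (S (T ω) - V (T ω)) else 0)
            - ∫ r in (0:ℝ)..t, (if r < T ω then v r * (S r - V r) * μ r else 0))) := by
  intro ω t ⟨ht0, htn⟩
  have hv' : ∀ r, HasDerivAt v (-δ r * v r) r := fun r => by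
    simpa only [← hv] using hasDerivAt_exp_neg_integral hδ 0 r
  have hv0 : ∀ r, v r ≠ 0 := fun r => hv r ▸ (Real.exp_pos _).ne'
  have hvc : Continuous v := continuous_iff_continuousAt.2 fun r => (hv' r).continuousAt
  have hm : 0 ≤ min t (T ω) := le_min ht0 (hTnn ω)
  have hmn : Icc 0 (min t (T ω)) ⊆ Icc 0 n := Icc_subset_Icc le_rfl ((min_le_left _ _).trans htn)
  have hSV : ContinuousOn (fun r => S r - V r) (Icc 0 (min t (T ω))) :=
    hS.continuousOn.sub fun r hr => (hV r (hmn hr)).continuousAt.continuousWithinAt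
  set P : ℝ → ℝ := fun s => ∫ r in (0:ℝ)..s, v r * Prem r
  have hX : ∀ s ∈ Icc 0 t, v s * Θ s ω = if s < T ω then P s - v s * V s
      else P (T ω) - if 0 < T ω then v (T ω) * S (T ω) else 0 := fun s hs => by
    rw [hΘ]
    exact mul_surplus_eq_ite (hTnn ω) hs.1 ((hvc.mul hPrem).intervalIntegrable _ _) (hv0 s)
  have hX₁ : ∀ r ∈ Icc 0 (min t (T ω)),
      HasDerivAt (fun s => P s - v s * V s) (v r * (S r - V r) * μ r) r := fun r hr =>
    ((hvc.mul hPrem).integral_hasStrictDerivAt 0 r).hasDerivAt.sub_mul_of_thiele (hv' r)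
      (hV r (hmn hr))
  constructor
  · rw [sub_eq_integral_mul_add_jump_of_mul_eq_ite (hTnn ω) ht0 hv' hv0 hδ hX
      (fun r hr => (hX₁ r hr).congr_deriv (mul_assoc _ _ _))
      ((hSV.mul hμ.continuousOn).intervalIntegrable_of_Icc hm)]
    split_ifs <;> first | tauto | ring1 | (field_simp [hv0 (T ω)]; ring1)
  · rw [sub_eq_integral_ite_add_jump (hTnn ω) ht0 hX hX₁ (fun r _ => hasDerivAt_const r _)
      (((hvc.continuousOn.mul hSV).mul hμ.continuousOn).intervalIntegrable_of_Icc hm)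
      intervalIntegrable_const]
    split_ifs <;> first | tauto | ring1

/-- Surplus dynamics with a single technical basis, in integrated form:
`Θ(t) - Θ(0) = ∫₀ᵗ δ Θ dr - ∫₀ᵗ (S-V) dM`, and equivalently for the discounted
surplus, `v(t)Θ(t) - v(0)Θ(0) = -∫₀ᵗ v (S-V) dM`, where the stochastic integral
against `M = N - ∫ 1_{T>r} μ dr` is written out pathwise for the single-jump
counting process `N(t) = 1_{T ≤ t}`. -/
theorem single_basis_surplus_dynamics
    {Ω : Type*} (n Sbar : ℝ) (hn : 0 < n)
    (T : Ω → ℝ) (hTnn : ∀ ω, 0 ≤ T ω)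
    (δ μ Prem S V : ℝ → ℝ)
    (hδ : Continuous δ) (hμ : Continuous μ)
    (hPrem : Continuous Prem) (hS : Continuous S)
    (v : ℝ → ℝ) (hv : ∀ t, v t = Real.exp (-(∫ r in (0:ℝ)..t, δ r)))
    -- V solves Thiele's equation with V(n) = S̄
    (hV : ∀ t ∈ Icc (0:ℝ) n,
      HasDerivAt V (δ t * V t + Prem t - μ t * (S t - V t)) t)
    (hVn : V n = Sbar)
    -- stochastic surplus Θ(t) = ∫₀ᵗ (v r / v t) dB(r) - 1_{T>t} V(t)
    (Θ : ℝ → Ω → ℝ)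
    (hΘ : ∀ t ω, Θ t ω =
      (∫ r in (0:ℝ)..t, (v r / v t) * (if r < T ω then Prem r else 0))
      - (if 0 < T ω ∧ T ω ≤ t then (v (T ω) / v t) * S (T ω) else 0)
      - (if t < T ω then V t else 0)) :
    ∀ ω, ∀ t ∈ Icc (0:ℝ) n,
      (Θ t ω - Θ 0 ω =
        (∫ r in (0:ℝ)..t, δ r * Θ r ω)
        - ((if 0 < T ω ∧ T ω ≤ t then S (T ω) - V (T ω) else 0)
            - ∫ r in (0:ℝ)..t, (if r < T ω then (S r - V r) * μ r else 0)))
      ∧ (v t * Θ t ω - v 0 * Θ 0 ω =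
        -((if 0 < T ω ∧ T ω ≤ t then v (T ω) * (S (T ω) - V (T ω)) else 0)
            - ∫ r in (0:ℝ)..t, (if r < T ω then v r * (S r - V r) * μ r else 0))) :=
  single_basis_surplus_dynamics_general n T hTnn δ μ Prem S V hδ hμ hPrem hS v hv hV Θ hΘ
end

section
/- Under a single special valuation basis (V(0)=0, V(n)=S̄), the discounted stochastic surplus satisfies v(t)Θ(t) = -∫₀ᵗ v(r)(S(r)-V(r)) dM(r) for all t ∈ [0,n]; in particular its expectation is zero for all t, i.e. the modeled discounted surplus vanishes identically. -/
/-!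
Thiele's equation says `d(v V) = v Prem - v (S - V) μ`, so integrating it from `0` to `t ∧ T`
turns the discounted surplus `v Θ`, path by path, into minus the jump-minus-compensator
integral `∫₀ᵗ v (S - V) dM`. Its expectation
vanishes: the survival function `exp (-∫ μ)` makes the law of `T` absolutely continuous with
density `μ exp (-∫ μ)`, so `E[h(T); 0 < T ≤ t] = ∫₀ᵗ h μ P(T > r) dr`, which is
`E ∫₀ᵗ 1{r < T} h(r) μ(r) dr` by Fubini.
-/

open MeasureTheory Set

theorem intervalIntegral.integral_ite_lt {f : ℝ → ℝ} {a b c : ℝ} (hab : a ≤ b) :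
    (∫ r in a..b, if r < c then f r else 0) = ∫ r in a..max a (min b c), f r := by
  rw [← intervalIntegral.integral_indicator ⟨le_max_left _ _, max_le hab (min_le_left _ _)⟩]
  refine intervalIntegral.integral_congr_ae ?_
  filter_upwards [volume.ae_ne c] with r hrc hr
  rw [uIoc_of_le hab] at hr
  have : r < c ↔ r ≤ max a (min b c) := by grind
  simp only [indicator_apply, mem_ofPred_eq, this]

theorem HasDerivAt.exp_neg_integral {f : ℝ → ℝ} (hf : Continuous f) (t : ℝ) :
    HasDerivAt (fun s => Real.exp (-∫ r in (0:ℝ)..s, f r))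
      (-(f t * Real.exp (-∫ r in (0:ℝ)..t, f r))) t := by
  simpa [mul_comm] using ((hf.integral_hasStrictDerivAt 0 t).hasDerivAt.fun_neg).exp

section Survival

variable {Ω : Type*} [MeasurableSpace Ω] {P : Measure Ω} {T : Ω → ℝ} {G ρ : ℝ → ℝ}

theorem nonneg_of_hasDerivAt_survival [IsFiniteMeasure P]
    (hG : ∀ s, P.real {ω | s < T ω} = G s) (hGρ : ∀ s, HasDerivAt G (-ρ s) s) (s : ℝ) :
    0 ≤ ρ s := by
  have hanti : Antitone G := fun x y hxy => by
    rw [← hG, ← hG]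
    exact measureReal_mono fun ω (hω : y < T ω) => hxy.trans_lt hω
  simpa using (hGρ s).neg.nonneg_of_monotone hanti.neg

theorem map_eq_withDensity_of_survival [IsFiniteMeasure P] (hT : Measurable T)
    (hG : ∀ s, P.real {ω | s < T ω} = G s) (hGρ : ∀ s, HasDerivAt G (-ρ s) s)
    (hρ : Continuous ρ) :
    P.map T = volume.withDensity (fun s => ENNReal.ofReal (ρ s)) := by
  refine Measure.ext_of_Ioc' _ _ (fun _ _ _ => measure_ne_top _ _) fun x y hxy => ?_
  have hpre : T ⁻¹' Ioc x y = {ω | x < T ω} \ {ω | y < T ω} := by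
    ext ω; simp [not_lt]
  have hρG : ∫ s in x..y, ρ s = G x - G y := by
    rw [intervalIntegral.integral_eq_sub_of_hasDerivAt (f := -G)
      (fun s _ => by simpa using (hGρ s).neg) (hρ.intervalIntegrable _ _), Pi.neg_apply,
      Pi.neg_apply, neg_sub_neg]
  rw [Measure.map_apply hT measurableSet_Ioc, withDensity_apply _ measurableSet_Ioc,
    ← ofReal_integral_eq_lintegral_ofReal (hρ.integrableOn_Ioc)
      (Filter.Eventually.of_forall (nonneg_of_hasDerivAt_survival hG hGρ)),
    ← intervalIntegral.integral_of_le hxy.le, hρG, ← ofReal_measureReal, hpre,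
    measureReal_sdiff (show {ω | y < T ω} ⊆ {ω | x < T ω} from fun _ hω => hxy.trans hω)
      (hT measurableSet_Ioi), hG, hG]

theorem integral_indicator_comp_of_survival [IsFiniteMeasure P] (hT : Measurable T)
    (hG : ∀ s, P.real {ω | s < T ω} = G s) (hGρ : ∀ s, HasDerivAt G (-ρ s) s)
    (hρ : Continuous ρ) {h : ℝ → ℝ} {a b : ℝ} (hh : ContinuousOn h (Ioc a b)) :
    ∫ ω, (Ioc a b).indicator h (T ω) ∂P = ∫ s in Ioc a b, ρ s * h s := by
  have hmeas : AEStronglyMeasurable ((Ioc a b).indicator h) (P.map T) :=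
    (aestronglyMeasurable_indicator_iff measurableSet_Ioc).mpr
      (hh.aestronglyMeasurable measurableSet_Ioc)
  rw [← integral_map hT.aemeasurable hmeas, map_eq_withDensity_of_survival hT hG hGρ hρ,
    integral_withDensity_eq_integral_toReal_smul hρ.measurable.ennreal_ofReal
      (Filter.Eventually.of_forall fun _ => ENNReal.ofReal_lt_top),
    ← integral_indicator measurableSet_Ioc]
  congr 1 with s
  by_cases hs : s ∈ Ioc a b <;>
    simp [hs, ENNReal.toReal_ofReal (nonneg_of_hasDerivAt_survival hG hGρ s)]

theorem integrable_indicator_comp [IsFiniteMeasure P] (hT : Measurable T) {h : ℝ → ℝ} {a b : ℝ}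
    (hh : ContinuousOn h (Icc a b)) :
    Integrable (fun ω => (Ioc a b).indicator h (T ω)) P := by
  have hmeas : AEStronglyMeasurable ((Ioc a b).indicator h) (P.map T) :=
    (aestronglyMeasurable_indicator_iff measurableSet_Ioc).mpr
      ((hh.mono Ioc_subset_Icc_self).aestronglyMeasurable measurableSet_Ioc)
  refine (integrable_map_measure hmeas hT.aemeasurable).mp ?_
  exact (integrable_indicator_iff measurableSet_Ioc).mpr
    ((hh.integrableOn_Icc).mono_set Ioc_subset_Icc_self)

theorem integrable_ite_lt_prod [IsFiniteMeasure P] {ν : Measure ℝ} [SFinite ν]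
    (hT : Measurable T) {g : ℝ → ℝ} (hg : Integrable g ν) :
    Integrable (fun p : Ω × ℝ => if p.2 < T p.1 then g p.2 else 0) (P.prod ν) :=
  (hg.comp_snd P).indicator (measurableSet_lt measurable_snd (hT.comp measurable_fst))

theorem integral_integral_ite_lt [IsFiniteMeasure P] {ν : Measure ℝ} [SFinite ν]
    (hT : Measurable T) {g : ℝ → ℝ} (hg : Integrable g ν) :
    ∫ ω, ∫ r, (if r < T ω then g r else 0) ∂ν ∂P = ∫ r, P.real {ω | r < T ω} * g r ∂ν := by
  rw [integral_integral_swap (integrable_ite_lt_prod hT hg)]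
  congr 1 with r
  rw [← smul_eq_mul, ← integral_indicator_const (g r)
    (show MeasurableSet {ω | r < T ω} from hT measurableSet_Ioi)]
  rfl

theorem integral_indicator_comp_sub_compensator_eq_zero [IsFiniteMeasure P] (hT : Measurable T)
    {μ : ℝ → ℝ} (hμ : Continuous μ)
    (hsurv : ∀ s, P.real {ω | s < T ω} = Real.exp (-∫ r in (0:ℝ)..s, μ r))
    {h : ℝ → ℝ} {a b : ℝ} (hh : ContinuousOn h (Icc a b)) :
    ∫ ω, ((Ioc a b).indicator h (T ω)
      - ∫ r in Ioc a b, (if r < T ω then h r * μ r else 0)) ∂P = 0 := by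
  have hhμ : IntegrableOn (fun r => h r * μ r) (Ioc a b) :=
    ((hh.mul hμ.continuousOn).integrableOn_Icc).mono_set Ioc_subset_Icc_self
  rw [integral_sub (integrable_indicator_comp hT hh)
      (integrable_ite_lt_prod hT hhμ).integral_prod_left,
    integral_indicator_comp_of_survival hT hsurv (fun s => HasDerivAt.exp_neg_integral hμ s)
      (hμ.mul (by fun_prop)) (hh.mono Ioc_subset_Icc_self),
    integral_integral_ite_lt hT hhμ, sub_eq_zero]
  congr 1 with s
  rw [hsurv]
  ring

end Survival

section Thiele

variable {v δ μ Prem S V : ℝ → ℝ} {a b : ℝ}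

theorem integral_thiele
    (hv : ∀ s, HasDerivAt v (-δ s * v s) s) (hμ : Continuous μ) (hPrem : Continuous Prem)
    (hS : Continuous S)
    (hV : ∀ s ∈ Icc a b, HasDerivAt V (δ s * V s + Prem s - μ s * (S s - V s)) s)
    {τ : ℝ} (hτ : τ ∈ Icc a b) :
    (∫ r in a..τ, v r * Prem r) - ∫ r in a..τ, v r * (S r - V r) * μ r
      = v τ * V τ - v a * V a := by
  have hsub : uIcc a τ ⊆ Icc a b := by rw [uIcc_of_le hτ.1]; exact Icc_subset_Icc_right hτ.2
  have hvc : Continuous v := continuous_iff_continuousAt.mpr fun s => (hv s).continuousAt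
  have hVc : ContinuousOn V (uIcc a τ) := fun s hs =>
    (hV s (hsub hs)).continuousAt.continuousWithinAt
  rw [← intervalIntegral.integral_sub (ContinuousOn.intervalIntegrable (by fun_prop))
    (ContinuousOn.intervalIntegrable (by fun_prop))]
  refine intervalIntegral.integral_eq_sub_of_hasDerivAt (f := fun s => v s * V s)
    (fun s hs => ?_) (ContinuousOn.intervalIntegrable (by fun_prop))
  exact ((hv s).fun_mul (hV s (hsub hs))).congr_deriv (by ring)

theorem discounted_surplus_eq {n t : ℝ}
    (hv : ∀ s, HasDerivAt v (-δ s * v s) s) (hvt : v t ≠ 0) (hμ : Continuous μ)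
    (hPrem : Continuous Prem) (hS : Continuous S)
    (hV : ∀ s ∈ Icc 0 n, HasDerivAt V (δ s * V s + Prem s - μ s * (S s - V s)) s)
    (hV0 : V 0 = 0) (ht : t ∈ Icc 0 n) (c : ℝ) :
    v t * ((∫ r in (0:ℝ)..t, (v r / v t) * (if r < c then Prem r else 0))
      - (if 0 < c ∧ c ≤ t then (v c / v t) * S c else 0) - (if t < c then V t else 0))
      = -((if 0 < c ∧ c ≤ t then v c * (S c - V c) else 0)
          - ∫ r in (0:ℝ)..t, (if r < c then v r * (S r - V r) * μ r else 0)) := by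
  set τ := max 0 (min t c) with hτ
  have hpremium : v t * ∫ r in (0:ℝ)..t, (v r / v t) * (if r < c then Prem r else 0)
      = ∫ r in (0:ℝ)..τ, v r * Prem r := by
    rw [← intervalIntegral.integral_const_mul, ← intervalIntegral.integral_ite_lt ht.1]
    congr 1 with r
    split_ifs
    · field_simp [hvt]
    · simp
  have hthiele : ∫ r in (0:ℝ)..τ, v r * Prem r
      = (∫ r in (0:ℝ)..τ, v r * (S r - V r) * μ r) + v τ * V τ := by
    have hτ0n : τ ∈ Icc 0 n :=
      ⟨le_max_left _ _, max_le (ht.1.trans ht.2) ((min_le_left _ _).trans ht.2)⟩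
    have := integral_thiele hv hμ hPrem hS hV hτ0n
    rw [hV0, mul_zero, sub_zero] at this
    linarith
  rw [mul_sub, mul_sub, hpremium, intervalIntegral.integral_ite_lt ht.1, ← hτ, hthiele]
  rcases le_or_gt c 0 with hc | hc
  · have hτ0 : τ = 0 := max_eq_left (min_le_of_right_le hc)
    simp [hτ0, hV0, hc.not_gt, (hc.trans ht.1).not_gt]
  rcases le_or_gt c t with hct | htc
  · have hτc : τ = c := by rw [hτ, min_eq_right hct, max_eq_right hc.le]
    simp only [hτc, hc, hct, hct.not_gt, and_self, if_true, if_false]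
    field_simp [hvt]
    ring
  · have hτt : τ = t := by rw [hτ, min_eq_left htc.le, max_eq_right ht.1]
    simp only [hτt, htc, htc.not_ge, and_false, if_true, if_false]
    ring

end Thiele

theorem single_basis_discounted_surplus_vanishes_general
    {Ω : Type*} [m0 : MeasurableSpace Ω] (P : Measure Ω) [IsProbabilityMeasure P]
    (n : ℝ)
    (T : Ω → ℝ) (hT : Measurable T)
    (δ μ Prem S V : ℝ → ℝ)
    (hδ : Continuous δ) (hμ : Continuous μ)
    (hPrem : Continuous Prem) (hS : Continuous S)
    -- under P, T has hazard rate μ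
    (hTlaw : ∀ t : ℝ, P {ω | t < T ω}
      = ENNReal.ofReal (Real.exp (-(∫ r in (0:ℝ)..t, μ r))))
    (v : ℝ → ℝ) (hv : ∀ t, v t = Real.exp (-(∫ r in (0:ℝ)..t, δ r)))
    -- V solves Thiele's equation with V(0) = 0 and V(n) = S̄ (special valuation basis)
    (hV : ∀ t ∈ Icc (0:ℝ) n,
      HasDerivAt V (δ t * V t + Prem t - μ t * (S t - V t)) t)
    (hV0 : V 0 = 0)
    (Θ : ℝ → Ω → ℝ)
    (hΘ : ∀ t ω, Θ t ω =
      (∫ r in (0:ℝ)..t, (v r / v t) * (if r < T ω then Prem r else 0))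
      - (if 0 < T ω ∧ T ω ≤ t then (v (T ω) / v t) * S (T ω) else 0)
      - (if t < T ω then V t else 0)) :
    ∀ t ∈ Icc (0:ℝ) n,
      (∀ ω, v t * Θ t ω =
        -((if 0 < T ω ∧ T ω ≤ t then v (T ω) * (S (T ω) - V (T ω)) else 0)
            - ∫ r in (0:ℝ)..t, (if r < T ω then v r * (S r - V r) * μ r else 0)))
      ∧ (∫ ω, v t * Θ t ω ∂P) = 0 := by
  have hvd : ∀ s, HasDerivAt v (-δ s * v s) s := fun s => by
    have h := HasDerivAt.exp_neg_integral hδ s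
    rwa [← hv s, ← funext hv, ← neg_mul] at h
  have hsurv : ∀ s, P.real {ω | s < T ω} = Real.exp (-∫ r in (0:ℝ)..s, μ r) := fun s => by
    rw [measureReal_def, hTlaw, ENNReal.toReal_ofReal (Real.exp_pos _).le]
  intro t ht
  have hpath : ∀ ω, v t * Θ t ω =
      -((if 0 < T ω ∧ T ω ≤ t then v (T ω) * (S (T ω) - V (T ω)) else 0)
          - ∫ r in (0:ℝ)..t, (if r < T ω then v r * (S r - V r) * μ r else 0)) := fun ω => by
    rw [hΘ]
    exact discounted_surplus_eq hvd (hv t ▸ (Real.exp_pos _).ne') hμ hPrem hS hV hV0 ht (T ω)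
  refine ⟨hpath, ?_⟩
  have hVc : ContinuousOn V (Icc 0 t) := fun s hs =>
    (hV s ⟨hs.1, hs.2.trans ht.2⟩).continuousAt.continuousWithinAt
  have hvc : Continuous v := continuous_iff_continuousAt.mpr fun s => (hvd s).continuousAt
  calc ∫ ω, v t * Θ t ω ∂P
      = ∫ ω, -((Ioc 0 t).indicator (fun s => v s * (S s - V s)) (T ω)
          - ∫ r in Ioc 0 t, (if r < T ω then v r * (S r - V r) * μ r else 0)) ∂P := by
        congr 1 with ω
        rw [hpath, intervalIntegral.integral_of_le ht.1]
        simp only [indicator_apply, mem_Ioc]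
    _ = 0 := by
      rw [integral_neg, integral_indicator_comp_sub_compensator_eq_zero hT hμ hsurv
        (by fun_prop), neg_zero]

/-- With a single special valuation basis (`V(0)=0`, `V(n)=S̄`), the discounted
stochastic surplus is the martingale integral `-∫₀ᵗ v (S-V) dM` pathwise, and
its expectation (the modeled discounted surplus) vanishes identically. -/
theorem single_basis_discounted_surplus_vanishes
    {Ω : Type*} [m0 : MeasurableSpace Ω] (P : Measure Ω) [IsProbabilityMeasure P]
    (n Sbar : ℝ) (hn : 0 < n)
    (T : Ω → ℝ) (hT : Measurable T) (hTnn : ∀ ω, 0 ≤ T ω)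
    (δ μ Prem S V : ℝ → ℝ)
    (hδ : Continuous δ) (hμ : Continuous μ)
    (hPrem : Continuous Prem) (hS : Continuous S)
    -- under P, T has hazard rate μ
    (hTlaw : ∀ t : ℝ, P {ω | t < T ω}
      = ENNReal.ofReal (Real.exp (-(∫ r in (0:ℝ)..t, μ r))))
    (v : ℝ → ℝ) (hv : ∀ t, v t = Real.exp (-(∫ r in (0:ℝ)..t, δ r)))
    -- V solves Thiele's equation with V(0) = 0 and V(n) = S̄ (special valuation basis)
    (hV : ∀ t ∈ Icc (0:ℝ) n,
      HasDerivAt V (δ t * V t + Prem t - μ t * (S t - V t)) t)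
    (hV0 : V 0 = 0) (hVn : V n = Sbar)
    (Θ : ℝ → Ω → ℝ)
    (hΘ : ∀ t ω, Θ t ω =
      (∫ r in (0:ℝ)..t, (v r / v t) * (if r < T ω then Prem r else 0))
      - (if 0 < T ω ∧ T ω ≤ t then (v (T ω) / v t) * S (T ω) else 0)
      - (if t < T ω then V t else 0)) :
    ∀ t ∈ Icc (0:ℝ) n,
      (∀ ω, v t * Θ t ω =
        -((if 0 < T ω ∧ T ω ≤ t then v (T ω) * (S (T ω) - V (T ω)) else 0)
            - ∫ r in (0:ℝ)..t, (if r < T ω then v r * (S r - V r) * μ r else 0)))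
      ∧ (∫ ω, v t * Θ t ω ∂P) = 0 :=
  single_basis_discounted_surplus_vanishes_general (m0 := m0) P n T hT δ μ Prem S V hδ hμ hPrem hS
    hTlaw v hv hV hV0 Θ hΘ
end
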